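/- Let (E_i, A_i, δ_i, □_i, P_i) be as in the standing setting, and assume that δ_i∘δ_{i+1} = 0 and δ_i∘P_i = 0 for all i ∈ ℤ. Then for all i: □_{i-1}∘δ_i = δ_i∘□_i, P_{i-1}∘δ_i = 0, and ker(δ_i) = im(P_i) ⊕ im(δ_{i+1}) as an internal direct sum of subspaces of E_i. -/
import Mathlib

open Module Polynomial


/-- `P` is the spectral projection of `B` onto the generalized zero eigenspace, i.e. the
projection onto the generalized eigenspace for the eigenvalue `0` along the sum of the generalized
eigenspaces for the nonzero eigenvalues. -/
def IsGenZeroProj {V : Type*} [AddCommGroup V] [Module ℂ V] (B P : V →ₗ[ℂ] V) : Prop :=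
  (∀ v ∈ Module.End.maxGenEigenspace B 0, P v = v) ∧
  (∀ μ : ℂ, μ ≠ 0 → ∀ v ∈ Module.End.maxGenEigenspace B μ, P v = 0)

/-- The operator `□_{i+1} = A_i ∘ δ_{i+1} + δ_{i+2} ∘ A_{i+1} : E_{i+1} → E_{i+1}` of the standing
setting.  Here `A i : E i → E (i+1)` is the `i`-th operator of the sequence and
`δ i : E (i+1) → E i` denotes the codifferential `δ_{i+1}` of the paper. -/
noncomputable def Box (E : ℤ → Type*) [∀ i, AddCommGroup (E i)] [∀ i, Module ℂ (E i)]
    (A : ∀ i : ℤ, E i →ₗ[ℂ] E (i + 1)) (δ : ∀ i : ℤ, E (i + 1) →ₗ[ℂ] E i) (i : ℤ) :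
    E (i + 1) →ₗ[ℂ] E (i + 1) :=
  A i ∘ₗ δ i + δ (i + 1) ∘ₗ A (i + 1)



section AuxS3

variable {V W : Type*} [AddCommGroup V] [Module ℂ V] [AddCommGroup W] [Module ℂ W]

lemma s3_comm_pow (f : V →ₗ[ℂ] W) (B : End ℂ V) (Cc : End ℂ W)
    (h : ∀ v, f (B v) = Cc (f v)) (n : ℕ) (v : V) : f ((B ^ n) v) = (Cc ^ n) (f v) := by
  induction n generalizing v with
  | zero => simp
  | succ n ih =>
    rw [pow_succ, pow_succ, Module.End.mul_apply, Module.End.mul_apply, ih, h]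

lemma s3_comm_maxGen (f : V →ₗ[ℂ] W) (B : End ℂ V) (Cc : End ℂ W)
    (h : ∀ v, f (B v) = Cc (f v)) {μ : ℂ} {v : V}
    (hv : v ∈ Module.End.maxGenEigenspace B μ) :
    f v ∈ Module.End.maxGenEigenspace Cc μ := by
  rw [Module.End.mem_maxGenEigenspace] at hv ⊢
  obtain ⟨n, hn⟩ := hv
  refine ⟨n, ?_⟩
  have hc : ∀ w, f ((B - μ • 1) w) = (Cc - μ • 1) (f w) := by
    intro w; simp [h w]
  rw [← s3_comm_pow f _ _ hc n v, hn, map_zero]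

lemma s3_comm_aeval (f : V →ₗ[ℂ] W) (B : End ℂ V) (Cc : End ℂ W)
    (h : ∀ v, f (B v) = Cc (f v)) (q : ℂ[X]) (v : V) :
    f ((aeval B q) v) = (aeval Cc q) (f v) := by
  induction q using Polynomial.induction_on' with
  | add p q hp hq => simp [hp, hq]
  | monomial n a =>
    simp only [aeval_monomial, Module.End.mul_apply, Module.algebraMap_end_apply, map_smul]
    rw [s3_comm_pow f B Cc h n v]

lemma s3_exists_poly_inv (B : End ℂ V) {μ : ℂ} (hμ : μ ≠ 0) {v : V}
    (hv : v ∈ Module.End.maxGenEigenspace B μ) :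
    ∃ q : ℂ[X], B ((aeval B q) v) = v := by
  obtain ⟨n, hn⟩ := (Module.End.mem_maxGenEigenspace B μ v).mp hv
  have hcop : IsCoprime (X : ℂ[X]) ((X - C μ) ^ n) := by
    have h1 : IsCoprime (X : ℂ[X]) (X - C μ) := by
      have := isCoprime_X_sub_C_of_isUnit_sub (a := (0 : ℂ)) (b := μ)
        (by simpa using (neg_ne_zero.mpr hμ).isUnit)
      simpa using this
    exact h1.pow_right
  obtain ⟨a, b, hab⟩ := hcop
  refine ⟨a, ?_⟩
  have hsub : aeval B ((X - C μ) ^ n) v = 0 := by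
    have he : aeval B ((X - C μ) ^ n) = (B - μ • 1) ^ n := by
      rw [map_pow]
      congr 1
      simp [Module.algebraMap_end_eq_smul_id, Module.End.one_eq_id]
    rw [he, hn]
  have h1 : aeval B (a * X + b * (X - C μ) ^ n) v = v := by rw [hab]; simp
  rw [map_add, map_mul, map_mul, LinearMap.add_apply, Module.End.mul_apply,
    Module.End.mul_apply, hsub, map_zero, add_zero, aeval_X] at h1
  calc B ((aeval B a) v) = (aeval B X * aeval B a) v := by simp [Module.End.mul_apply]
    _ = (aeval B a * aeval B X) v := by rw [← map_mul, ← map_mul, mul_comm]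
    _ = v := by simpa [Module.End.mul_apply] using h1

lemma s3_indep_finsupp_eq_zero {ι N : Type*} [AddCommGroup N] [Module ℂ N]
    {p : ι → Submodule ℂ N} (hind : iSupIndep p) (l : ι →₀ N) (hl : ∀ i, l i ∈ p i)
    (h0 : (l.sum fun _ y => y) = 0) (i : ι) : l i = 0 := by
  classical
  by_cases hi : i ∈ l.support
  · have hsum : l i + ∑ j ∈ l.support.erase i, l j = 0 := by
      rw [Finset.add_sum_erase _ _ hi]; exact h0
    have hmem : l i ∈ ⨆ (j) (_ : j ≠ i), p j := by
      rw [eq_neg_of_add_eq_zero_left hsum]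
      exact Submodule.neg_mem _ (Submodule.sum_mem _ fun j hj =>
        Submodule.mem_iSup_of_mem j (Submodule.mem_iSup_of_mem (Finset.ne_of_mem_erase hj) (hl j)))
    exact Submodule.disjoint_def.mp (hind i) _ (hl i) hmem
  · simpa using Finsupp.notMem_support_iff.mp hi

lemma s3_decomp {V : Type*} [AddCommGroup V] [Module ℂ V] [FiniteDimensional ℂ V]
    (B : End ℂ V) (x : V) :
    ∃ l : ℂ →₀ V, (∀ μ, l μ ∈ Module.End.maxGenEigenspace B μ) ∧
      (l.sum fun _ y => y) = x := by
  have := Module.End.iSup_maxGenEigenspace_eq_top B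
  exact (Submodule.mem_iSup_iff_exists_finsupp _ x).mp (this ▸ Submodule.mem_top)

end AuxS3

/-- In the standing setting, if `δ_i∘δ_{i+1} = 0` and `δ_i∘P_i = 0` for all `i`,
then for all `i`: `□_{i-1}∘δ_i = δ_i∘□_i`, `P_{i-1}∘δ_i = 0`, and
`ker(δ_i) = im(P_i) ⊕ im(δ_{i+1})` as an internal direct sum.

(Indexing: the statement for all `i ∈ ℤ` is expressed by quantifying over `k ∈ ℤ`, with
`E_{k+1} = E (k+1)`, `δ_{k+1} = δ k`, `□_{k+1} = Box E A δ k`, `P_{k+1} = P k`.) -/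
theorem statement3 (E : ℤ → Type*) [∀ i, AddCommGroup (E i)] [∀ i, Module ℂ (E i)]
    [∀ i, FiniteDimensional ℂ (E i)]
    (A : ∀ i : ℤ, E i →ₗ[ℂ] E (i + 1)) (δ : ∀ i : ℤ, E (i + 1) →ₗ[ℂ] E i)
    (P : ∀ i : ℤ, E (i + 1) →ₗ[ℂ] E (i + 1))
    (hP : ∀ i : ℤ, IsGenZeroProj (Box E A δ i) (P i))
    (hδδ : ∀ i : ℤ, δ i ∘ₗ δ (i + 1) = 0)
    (hδP : ∀ i : ℤ, δ i ∘ₗ P i = 0) :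
    ∀ k : ℤ,
      Box E A δ k ∘ₗ δ (k + 1) = δ (k + 1) ∘ₗ Box E A δ (k + 1) ∧
      P k ∘ₗ δ (k + 1) = 0 ∧
      (Disjoint (LinearMap.range (P k)) (LinearMap.range (δ (k + 1))) ∧
        LinearMap.range (P k) ⊔ LinearMap.range (δ (k + 1)) = LinearMap.ker (δ k)) := by
  -- Part 1
  have h1 : ∀ k : ℤ, Box E A δ k ∘ₗ δ (k + 1) = δ (k + 1) ∘ₗ Box E A δ (k + 1) := by
    intro k
    ext x
    have e1 : δ k (δ (k + 1) x) = 0 := LinearMap.congr_fun (hδδ k) x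
    have e2 : δ (k + 1) (δ (k + 1 + 1) (A (k + 1 + 1) x)) = 0 :=
      LinearMap.congr_fun (hδδ (k + 1)) (A (k + 1 + 1) x)
    simp [Box, e1, e2]
  -- Part 2
  have h2 : ∀ k : ℤ, P k ∘ₗ δ (k + 1) = 0 := by
    intro k
    ext x
    obtain ⟨l, hl, hsum⟩ := s3_decomp (Box E A δ (k + 1)) x
    have hcomm : ∀ v, δ (k + 1) ((Box E A δ (k + 1)) v) = (Box E A δ k) (δ (k + 1) v) :=
      fun v => (LinearMap.congr_fun (h1 k) v).symm
    have key : ∀ μ : ℂ, P k (δ (k + 1) (l μ)) = 0 := by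
      intro μ
      by_cases hμ : μ = 0
      · subst hμ
        have hfix : P (k + 1) (l 0) = l 0 := (hP (k + 1)).1 _ (hl 0)
        have : δ (k + 1) (l 0) = 0 := by
          rw [← hfix]
          exact LinearMap.congr_fun (hδP (k + 1)) (l 0)
        rw [this, map_zero]
      · exact (hP k).2 μ hμ _ (s3_comm_maxGen (δ (k + 1)) _ _ hcomm (hl μ))
    calc (P k ∘ₗ δ (k + 1)) x = P k (δ (k + 1) (l.sum fun _ y => y)) := by rw [hsum]; rfl
      _ = l.sum fun μ y => P k (δ (k + 1) y) := by
          rw [Finsupp.sum, map_sum, map_sum]; rfl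
      _ = 0 := by
          rw [Finsupp.sum]
          exact Finset.sum_eq_zero fun μ _ => key μ
  refine fun k => ⟨h1 k, h2 k, ?_, ?_⟩
  · -- Disjointness
    rw [Submodule.disjoint_def]
    rintro x ⟨u, rfl⟩ hx2
    obtain ⟨y, hy⟩ := hx2
    -- P k u lies in the generalized zero eigenspace
    have hmem : P k u ∈ Module.End.maxGenEigenspace (Box E A δ k) 0 := by
      obtain ⟨l, hl, hsum⟩ := s3_decomp (Box E A δ k) u
      have : P k u = l.sum fun μ y => P k y := by
        rw [← hsum, Finsupp.sum, Finsupp.sum, map_sum]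
      rw [this, Finsupp.sum]
      refine Submodule.sum_mem _ fun μ _ => ?_
      by_cases hμ : μ = 0
      · subst hμ; rw [(hP k).1 _ (hl 0)]; exact hl 0
      · rw [(hP k).2 μ hμ _ (hl μ)]; exact Submodule.zero_mem _
    have hfix : P k (P k u) = P k u := (hP k).1 _ hmem
    rw [← hfix, ← hy]
    exact LinearMap.congr_fun (h2 k) y
  · -- sup = ker
    apply le_antisymm
    · apply sup_le
      · rintro x ⟨u, rfl⟩
        exact LinearMap.congr_fun (hδP k) u
      · rintro x ⟨y, rfl⟩
        exact LinearMap.congr_fun (hδδ k) y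
    · intro x hx
      rw [LinearMap.mem_ker] at hx
      set B := Box E A δ k with hB
      set Cc : Module.End ℂ (E k) := δ k ∘ₗ A k with hCc
      have hcomm : ∀ v, δ k (B v) = Cc (δ k v) := by
        intro v
        have e2 : δ k (δ (k + 1) (A (k + 1) v)) = 0 :=
          LinearMap.congr_fun (hδδ k) (A (k + 1) v)
        simp [hB, Box, hCc, e2]
      obtain ⟨l, hl, hsum⟩ := s3_decomp B x
      -- each δ k (l μ) = 0
      have hδl : ∀ μ : ℂ, δ k (l μ) = 0 := by
        have hind := Module.End.independent_maxGenEigenspace Cc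
        have := s3_indep_finsupp_eq_zero hind (l.mapRange (δ k) (map_zero _))
          (fun μ => by
            rw [Finsupp.mapRange_apply]
            exact s3_comm_maxGen (δ k) _ _ hcomm (hl μ))
          (by
            rw [Finsupp.sum_mapRange_index (fun _ => rfl)]
            calc (l.sum fun _ y => δ k y) = δ k (l.sum fun _ y => y) := by
                  rw [Finsupp.sum, Finsupp.sum, map_sum]
              _ = 0 := by rw [hsum, hx])
        intro μ
        have h := this μ
        rwa [Finsupp.mapRange_apply] at h
      have key : ∀ μ : ℂ, l μ ∈ LinearMap.range (P k) ⊔ LinearMap.range (δ (k + 1)) := by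
        intro μ
        by_cases hμ : μ = 0
        · subst hμ
          exact Submodule.mem_sup_left ⟨l 0, (hP k).1 _ (hl 0)⟩
        · obtain ⟨q, hq⟩ := s3_exists_poly_inv B hμ (hl μ)
          set w := (Polynomial.aeval B q) (l μ) with hw
          have hδw : δ k w = 0 := by
            rw [hw, s3_comm_aeval (δ k) _ _ hcomm, hδl μ, map_zero]
          have : l μ = δ (k + 1) (A (k + 1) w) := by
            rw [← hq]
            have : B w = A k (δ k w) + δ (k + 1) (A (k + 1) w) := by simp [hB, Box]
            rw [this, hδw, map_zero, zero_add]
          exact Submodule.mem_sup_right ⟨A (k + 1) w, this.symm⟩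
      rw [← hsum, Finsupp.sum]
      exact Submodule.sum_mem _ fun μ _ => key μ
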